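/- For the Static Black-Peg AB Game with 2 pegs and c ≥ 2 colors: if a feasible strategy contains three (1,1)-questions, then on at least one of the two pegs all c colors occur among the strategy's questions. -/

import Mathlib

/-- The answer of a question `Q` to a secret `S`: the number of pegs where they agree. -/
def answer {p c : ℕ} (Q S : Fin p → Fin c) : ℕ :=
  (Finset.univ.filter fun i => Q i = S i).card

/-- A strategy (a list of pairwise distinct injective codes) is feasible if the list of
answers determines every injective secret uniquely. -/
def Feasible {p c : ℕ} (qs : List (Fin p → Fin c)) : Prop :=
  qs.Nodup ∧ (∀ Q ∈ qs, Function.Injective Q) ∧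
    ∀ S S' : Fin p → Fin c, Function.Injective S → Function.Injective S' →
      qs.map (fun Q => answer Q S) = qs.map (fun Q => answer Q S') → S = S'

/-- The number of questions of the strategy `qs` having color `q` on peg `i`. -/
def occ {p c : ℕ} (qs : List (Fin p → Fin c)) (i : Fin p) (q : Fin c) : ℕ :=
  qs.countP fun Q => decide (Q i = q)

/-
Suppose color `a` never occurs on peg 0 and color `b` never occurs on peg 1. A (1,1)-question
`Q` is the only question sharing a color with `(a, Q 1)` and the only one sharing a color with
`(Q 0, b)`, so, unless `Q 1 = a` or `Q 0 = b`, these two distinct secrets receive the same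
answers (1 from `Q`, 0 from every other question). Since a (1,1)-question is determined by its
color on either peg, at most one of three (1,1)-questions has `Q 1 = a` and at most one has
`Q 0 = b`, so one of them contradicts feasibility.
-/

lemma answer_fin_two {c : ℕ} (Q S : Fin 2 → Fin c) :
    answer Q S = (if Q 0 = S 0 then 1 else 0) + (if Q 1 = S 1 then 1 else 0) := by
  rw [answer, Finset.card_filter, Fin.sum_univ_two]

lemma eq_of_occ_eq_one {p c : ℕ} {qs : List (Fin p → Fin c)} {i : Fin p} {q : Fin c}
    (h : occ qs i q = 1) {Q Q' : Fin p → Fin c} (hQ : Q ∈ qs) (hQ' : Q' ∈ qs)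
    (hQi : Q i = q) (hQ'i : Q' i = q) : Q = Q' := by
  rw [occ, List.countP_eq_length_filter, List.length_eq_one_iff] at h
  obtain ⟨R, hR⟩ := h
  have mem_singleton : ∀ P ∈ qs, P i = q → P = R := fun P hP hPi => by
    simpa [hR] using (List.mem_filter (p := fun Q => decide (Q i = q))).2 ⟨hP, by simpa⟩
  rw [mem_singleton Q hQ hQi, mem_singleton Q' hQ' hQ'i]

def IsOneOneQuestion {c : ℕ} (qs : List (Fin 2 → Fin c)) (Q : Fin 2 → Fin c) : Prop :=
  occ qs 0 (Q 0) = 1 ∧ occ qs 1 (Q 1) = 1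

namespace IsOneOneQuestion

variable {c : ℕ} {qs : List (Fin 2 → Fin c)} {Q R : Fin 2 → Fin c}

lemma apply_eq_iff (hQ : IsOneOneQuestion qs Q) (hQmem : Q ∈ qs) (hR : R ∈ qs) (i : Fin 2) :
    R i = Q i ↔ R = Q := by
  refine ⟨fun hRi => ?_, fun hRQ => hRQ ▸ rfl⟩
  fin_cases i
  · exact eq_of_occ_eq_one hQ.1 hR hQmem hRi rfl
  · exact eq_of_occ_eq_one hQ.2 hR hQmem hRi rfl

lemma map_answer_eq {a b : Fin c} (hQ : IsOneOneQuestion qs Q) (hQmem : Q ∈ qs)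
    (ha : ∀ R ∈ qs, R 0 ≠ a) (hb : ∀ R ∈ qs, R 1 ≠ b) :
    qs.map (fun R => answer R ![a, Q 1]) = qs.map (fun R => answer R ![Q 0, b]) := by
  refine List.map_congr_left fun R hR => ?_
  simp [answer_fin_two, ha R hR, hb R hR, hQ.apply_eq_iff hQmem hR]

end IsOneOneQuestion

lemma Feasible.apply_one_eq_or_apply_zero_eq {c : ℕ} {qs : List (Fin 2 → Fin c)}
    {Q : Fin 2 → Fin c} {a b : Fin c} (hqs : Feasible qs) (hQ : IsOneOneQuestion qs Q)
    (hQmem : Q ∈ qs) (ha : ∀ R ∈ qs, R 0 ≠ a) (hb : ∀ R ∈ qs, R 1 ≠ b) :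
    Q 1 = a ∨ Q 0 = b := by
  by_contra! h
  have hsecrets := hqs.2.2 _ _ (injective_pair_iff_ne.2 h.1.symm) (injective_pair_iff_ne.2 h.2)
    (hQ.map_answer_eq hQmem ha hb)
  exact ha Q hQmem (congrFun hsecrets 0).symm

lemma exists_not_and_not_of_three {α : Type*} {A B : α → Prop} {x y z : α}
    (hxy : x ≠ y) (hxz : x ≠ z) (hyz : y ≠ z)
    (hA : ∀ u ∈ [x, y, z], ∀ v ∈ [x, y, z], A u → A v → u = v)
    (hB : ∀ u ∈ [x, y, z], ∀ v ∈ [x, y, z], B u → B v → u = v) :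
    ∃ u ∈ [x, y, z], ¬A u ∧ ¬B u := by
  simp only [List.mem_cons, List.not_mem_nil, or_false, forall_eq_or_imp, forall_eq,
    exists_eq_or_imp, exists_eq_left] at *
  grind

theorem statement7_general (c : ℕ) (qs : List (Fin 2 → Fin c))
    (hqs : Feasible qs) (Q₁ Q₂ Q₃ : Fin 2 → Fin c)
    (h₁ : Q₁ ∈ qs) (h₂ : Q₂ ∈ qs) (h₃ : Q₃ ∈ qs)
    (hne12 : Q₁ ≠ Q₂) (hne13 : Q₁ ≠ Q₃) (hne23 : Q₂ ≠ Q₃)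
    (o₁ : occ qs 0 (Q₁ 0) = 1 ∧ occ qs 1 (Q₁ 1) = 1)
    (o₂ : occ qs 0 (Q₂ 0) = 1 ∧ occ qs 1 (Q₂ 1) = 1)
    (o₃ : occ qs 0 (Q₃ 0) = 1 ∧ occ qs 1 (Q₃ 1) = 1) :
    ∃ i : Fin 2, ∀ q : Fin c, ∃ Q ∈ qs, Q i = q := by
  by_contra! hmissing
  obtain ⟨a, ha⟩ := hmissing 0
  obtain ⟨b, hb⟩ := hmissing 1
  have hthree : ∀ Q ∈ [Q₁, Q₂, Q₃], Q ∈ qs ∧ IsOneOneQuestion qs Q := by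
    simp only [List.mem_cons, List.not_mem_nil, or_false]
    rintro Q (rfl | rfl | rfl)
    exacts [⟨h₁, o₁⟩, ⟨h₂, o₂⟩, ⟨h₃, o₃⟩]
  have unique_color (i : Fin 2) (q : Fin c) :
      ∀ u ∈ [Q₁, Q₂, Q₃], ∀ v ∈ [Q₁, Q₂, Q₃], u i = q → v i = q → u = v :=
    fun u hu v hv hui hvi =>
      ((hthree v hv).2.apply_eq_iff (hthree v hv).1 (hthree u hu).1 i).1 (hui.trans hvi.symm)
  obtain ⟨Q, hQ, hQa, hQb⟩ :=
    exists_not_and_not_of_three hne12 hne13 hne23 (unique_color 1 a) (unique_color 0 b)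
  exact (hqs.apply_one_eq_or_apply_zero_eq (hthree Q hQ).2 (hthree Q hQ).1 ha hb).elim hQa hQb

theorem statement7 (c : ℕ) (hc : 2 ≤ c) (qs : List (Fin 2 → Fin c))
    (hqs : Feasible qs) (Q₁ Q₂ Q₃ : Fin 2 → Fin c)
    (h₁ : Q₁ ∈ qs) (h₂ : Q₂ ∈ qs) (h₃ : Q₃ ∈ qs)
    (hne12 : Q₁ ≠ Q₂) (hne13 : Q₁ ≠ Q₃) (hne23 : Q₂ ≠ Q₃)
    (o₁ : occ qs 0 (Q₁ 0) = 1 ∧ occ qs 1 (Q₁ 1) = 1)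
    (o₂ : occ qs 0 (Q₂ 0) = 1 ∧ occ qs 1 (Q₂ 1) = 1)
    (o₃ : occ qs 0 (Q₃ 0) = 1 ∧ occ qs 1 (Q₃ 1) = 1) :
    ∃ i : Fin 2, ∀ q : Fin c, ∃ Q ∈ qs, Q i = q :=
  statement7_general c qs hqs Q₁ Q₂ Q₃ h₁ h₂ h₃ hne12 hne13 hne23 o₁ o₂ o₃
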